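/- Let Γ and Δ = {1,…,d} be finite sets, K ≤ Sym(Γ), L ≤ Sym(Δ), m ≥ 2 an integer, and k = min{k_m, d}, where k_m is the number of orbits of K in its componentwise action on Γ^m. Let 1 denote the trivial subgroup of Sym(Γ). Then 1 ↑ L^[k] ≤ (K↑L)^(m). -/

import Mathlib

open Equiv MulAction Pointwise

/-- The `m`-closure of a permutation group `G ≤ Sym(Ω)`: the largest subgroup of `Sym(Ω)`
having the same orbits as `G` in the induced componentwise action on `Ω^m`. -/
def mClosure {Ω : Type*} (m : ℕ) (G : Subgroup (Equiv.Perm Ω)) : Subgroup (Equiv.Perm Ω) :=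
  sSup {H : Subgroup (Equiv.Perm Ω) |
    ∀ α : Fin m → Ω, MulAction.orbit H α = MulAction.orbit G α}

/-- An ordered partition of `Ω` into at most `m` nonempty classes. -/
structure OrderedPartition (Ω : Type*) (m : ℕ) where
  classes : List (Set Ω)
  length_le : classes.length ≤ m
  nonempty : ∀ s ∈ classes, s.Nonempty
  pairwise_disjoint : classes.Pairwise Disjoint
  covers : ∀ x : Ω, ∃ s ∈ classes, x ∈ s

namespace OrderedPartition

variable {Ω : Type*} {m : ℕ}

theorem ext' {P Q : OrderedPartition Ω m} (h : P.classes = Q.classes) : P = Q := by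
  cases P; cases Q; simpa using h

/-- The natural action of a permutation on an ordered partition, classwise. -/
def act (f : Equiv.Perm Ω) (P : OrderedPartition Ω m) : OrderedPartition Ω m where
  classes := P.classes.map fun s => f '' s
  length_le := by simpa using P.length_le
  nonempty := by
    intro s hs
    obtain ⟨t, ht, rfl⟩ := List.mem_map.mp hs
    exact (P.nonempty t ht).image _
  pairwise_disjoint :=
    P.pairwise_disjoint.map _ fun s t h => (Set.disjoint_image_iff f.injective).mpr h
  covers := by
    intro x
    obtain ⟨s, hs, hx⟩ := P.covers (f⁻¹ x)
    exact ⟨f '' s, List.mem_map.mpr ⟨s, hs, rfl⟩, f⁻¹ x, hx, by simp⟩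

instance : SMul (Equiv.Perm Ω) (OrderedPartition Ω m) := ⟨act⟩

theorem smul_classes (f : Equiv.Perm Ω) (P : OrderedPartition Ω m) :
    (f • P).classes = P.classes.map fun s => f '' s := rfl

instance : MulAction (Equiv.Perm Ω) (OrderedPartition Ω m) where
  one_smul P := ext' (by simp [smul_classes])
  mul_smul f g P := ext' (by
    simp [smul_classes, List.map_map, Function.comp_def, Set.image_image])

end OrderedPartition

/-- The partition `m`-closure `G^[m]` of a permutation group `G ≤ Sym(Ω)`: the largest
subgroup of `Sym(Ω)` having the same orbits as `G` in its induced action on the set of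
ordered partitions of `Ω` into at most `m` nonempty classes. -/
def partClosure {Ω : Type*} (m : ℕ) (G : Subgroup (Equiv.Perm Ω)) : Subgroup (Equiv.Perm Ω) :=
  sSup {H : Subgroup (Equiv.Perm Ω) |
    ∀ P : OrderedPartition Ω m, MulAction.orbit H P = MulAction.orbit G P}

/-- The element `(g_1, …, g_d; ḡ)` of the wreath product in product action:
`(ω^g)_i = (ω_{i^{ḡ⁻¹}})^{g_{i^{ḡ⁻¹}}}`. -/
def wreathElem {Γ Δ : Type*} (gs : Δ → Equiv.Perm Γ) (σ : Equiv.Perm Δ) :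
    Equiv.Perm (Δ → Γ) where
  toFun ω i := gs (σ⁻¹ i) (ω (σ⁻¹ i))
  invFun ω i := (gs i)⁻¹ (ω (σ i))
  left_inv ω := by funext i; simp
  right_inv ω := by funext i; simp

theorem wreathElem_apply {Γ Δ : Type*} (gs : Δ → Equiv.Perm Γ) (σ : Equiv.Perm Δ)
    (ω : Δ → Γ) (i : Δ) : wreathElem gs σ ω i = gs (σ⁻¹ i) (ω (σ⁻¹ i)) := rfl

theorem wreathElem_one {Γ Δ : Type*} :
    wreathElem (fun _ : Δ => (1 : Equiv.Perm Γ)) 1 = 1 := by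
  refine Equiv.ext fun ω => funext fun i => ?_
  simp [wreathElem_apply]

theorem wreathElem_mul {Γ Δ : Type*} (gs hs : Δ → Equiv.Perm Γ) (σ τ : Equiv.Perm Δ) :
    wreathElem gs σ * wreathElem hs τ = wreathElem (fun j => gs (τ j) * hs j) (σ * τ) := by
  refine Equiv.ext fun ω => funext fun i => ?_
  simp [wreathElem_apply, Equiv.Perm.mul_apply, mul_inv_rev]

theorem wreathElem_inv {Γ Δ : Type*} (gs : Δ → Equiv.Perm Γ) (σ : Equiv.Perm Δ) :
    (wreathElem gs σ)⁻¹ = wreathElem (fun j => (gs (σ⁻¹ j))⁻¹) σ⁻¹ := by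
  rw [inv_eq_iff_mul_eq_one, wreathElem_mul]
  simpa using wreathElem_one

/-- The wreath product `K ↑ L` of `K ≤ Sym(Γ)` and `L ≤ Sym(Δ)` in product action,
as a subgroup of `Sym(Γ^Δ)`. -/
def wreathProduct {Γ Δ : Type*} (K : Subgroup (Equiv.Perm Γ)) (L : Subgroup (Equiv.Perm Δ)) :
    Subgroup (Equiv.Perm (Δ → Γ)) where
  carrier := {h | ∃ (gs : Δ → Equiv.Perm Γ) (σ : Equiv.Perm Δ),
    (∀ i, gs i ∈ K) ∧ σ ∈ L ∧ h = wreathElem gs σ}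
  one_mem' := ⟨fun _ => 1, 1, fun _ => K.one_mem, L.one_mem, wreathElem_one.symm⟩
  mul_mem' := by
    rintro f h ⟨gs, σ, hgs, hσ, rfl⟩ ⟨hs, τ, hhs, hτ, rfl⟩
    exact ⟨fun j => gs (τ j) * hs j, σ * τ, fun j => K.mul_mem (hgs _) (hhs _),
      L.mul_mem hσ hτ, wreathElem_mul gs hs σ τ⟩
  inv_mem' := by
    rintro f ⟨gs, σ, hgs, hσ, rfl⟩
    exact ⟨fun j => (gs (σ⁻¹ j))⁻¹, σ⁻¹, fun j => K.inv_mem (hgs _), L.inv_mem hσ,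
      wreathElem_inv gs σ⟩

/-- `k_m`: the number of orbits of `K ≤ Sym(Γ)` in its componentwise action on `Γ^m`. -/
noncomputable def numOrbits {Γ : Type*} (m : ℕ) (K : Subgroup (Equiv.Perm Γ)) : ℕ :=
  Nat.card (MulAction.orbitRel.Quotient K (Fin m → Γ))

/-- A permutation group `L ≤ Sym(Δ)` is primitive if it is transitive and preserves
no nontrivial partition of `Δ` (partitions being identified with equivalence relations). -/
def IsPrimitiveSubgroup {Δ : Type*} (L : Subgroup (Equiv.Perm Δ)) : Prop :=
  (∀ x y : Δ, ∃ g ∈ L, g x = y) ∧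
  ∀ r : Setoid Δ, (∀ g ∈ L, ∀ x y : Δ, r.r x y → r.r (g x) (g y)) → r = ⊥ ∨ r = ⊤

/-- The direct product `K × L ≤ Sym(Γ × Δ)` acting coordinatewise on `Γ × Δ`. -/
def prodSubgroup {Γ Δ : Type*} (K : Subgroup (Equiv.Perm Γ)) (L : Subgroup (Equiv.Perm Δ)) :
    Subgroup (Equiv.Perm (Γ × Δ)) where
  carrier := {h | ∃ k ∈ K, ∃ l ∈ L, h = Equiv.prodCongr k l}
  one_mem' := ⟨1, K.one_mem, 1, L.one_mem, Equiv.ext fun x => rfl⟩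
  mul_mem' := by
    rintro f h ⟨k₁, hk₁, l₁, hl₁, rfl⟩ ⟨k₂, hk₂, l₂, hl₂, rfl⟩
    exact ⟨k₁ * k₂, K.mul_mem hk₁ hk₂, l₁ * l₂, L.mul_mem hl₁ hl₂, Equiv.ext fun x => rfl⟩
  inv_mem' := by
    rintro f ⟨k, hk, l, hl, rfl⟩
    exact ⟨k⁻¹, K.inv_mem hk, l⁻¹, L.inv_mem hl, Equiv.ext fun x => rfl⟩

/-- Given an enumeration (via `sIdx`) of the orbits of `K` on `Γ^m` by `Fin a`,
and `α ∈ Ω^m` with `Ω = Γ^d` viewed as a `d × m` matrix with rows `α[i] = (j ↦ α j i)`,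
`piClasses sIdx α` is the ordered partition `Π(α)` of `Δ = Fin d` whose `ℓ`-th class
consists of the `i` whose row `α[i]` lies in the orbit with the `ℓ`-th smallest
occurring index. -/
def piClasses {Γ : Type*} {d m a : ℕ} (sIdx : (Fin m → Γ) → Fin a)
    (α : Fin m → (Fin d → Γ)) : List (Set (Fin d)) :=
  ((Finset.univ.image fun i : Fin d => sIdx fun j => α j i).sort (· ≤ ·)).map
    fun t => {i : Fin d | sIdx (fun j => α j i) = t}

/-!
View `α ∈ Ω^m`, `Ω = Γ^d`, as a `d × m` matrix over `Γ` and colour its `i`-th row by the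
`K`-orbit it lies in. Ordering the colours by a fixed enumeration of the `k_m` orbits of `K`,
the colour classes form an ordered partition `P` of `Δ` into at most `min k_m d` classes.
For `σ ∈ L^[k]` some `τ ∈ L` has `P^τ = P^σ`, so row `σ⁻¹ τ i` of `α` is in the `K`-orbit of
row `i`; picking `kᵢ ∈ K` realising this, `(k₁, …, k_d; τ) ∈ K ↑ L` maps `α` where
`(1, …, 1; σ)` does. Since the `m`-closure is the group of all permutations preserving each
orbit on `Ω^m`, this puts `(1, …, 1; σ)` in `(K ↑ L)^(m)`.
-/

open Finset

section OrbitPreserving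

variable {G : Type*} [Group G] (X : Type*) [MulAction G X]

def orbitPreservingSubgroup (H : Subgroup G) : Subgroup G where
  carrier := {f | ∀ x : X, f • x ∈ orbit H x}
  one_mem' x := by simp
  mul_mem' {f g} hf hg x := by
    rw [mul_smul, ← orbit_eq_iff.mpr (hg x)]
    exact hf (g • x)
  inv_mem' {f} hf x := mem_orbit_symm.mp (by simpa using hf (f⁻¹ • x))

variable {X}

theorem le_orbitPreservingSubgroup (H : Subgroup G) : H ≤ orbitPreservingSubgroup X H :=
  fun g hg x => mem_orbit x (⟨g, hg⟩ : H)

theorem orbit_orbitPreservingSubgroup (H : Subgroup G) (x : X) :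
    orbit (orbitPreservingSubgroup X H) x = orbit H x := by
  refine (Set.range_subset_iff.mpr fun f => f.2 x).antisymm ?_
  rintro _ ⟨g, rfl⟩
  exact ⟨⟨g, le_orbitPreservingSubgroup H g.2⟩, rfl⟩

variable (X)

theorem sSup_orbit_eq_eq_orbitPreservingSubgroup (H : Subgroup G) :
    sSup {H' : Subgroup G | ∀ x : X, orbit H' x = orbit H x} = orbitPreservingSubgroup X H :=
  le_antisymm
    (sSup_le fun H' hH' f hf x => hH' x ▸ mem_orbit x (⟨f, hf⟩ : H'))
    (le_sSup (orbit_orbitPreservingSubgroup H))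

end OrbitPreserving

theorem mem_mClosure_iff {Ω : Type*} {m : ℕ} {G : Subgroup (Perm Ω)} {f : Perm Ω} :
    f ∈ mClosure m G ↔ ∀ α : Fin m → Ω, f • α ∈ orbit G α := by
  rw [mClosure, sSup_orbit_eq_eq_orbitPreservingSubgroup]
  rfl

theorem mem_partClosure_iff {Ω : Type*} {m : ℕ} {G : Subgroup (Perm Ω)} {f : Perm Ω} :
    f ∈ partClosure m G ↔ ∀ P : OrderedPartition Ω m, f • P ∈ orbit G P := by
  rw [partClosure, sSup_orbit_eq_eq_orbitPreservingSubgroup]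
  rfl

namespace OrderedPartition

variable {Δ β : Type*} [Fintype Δ] [LinearOrder β] {n : ℕ}

def ofFun (c : Δ → β) (hc : #(univ.image c) ≤ n) : OrderedPartition Δ n where
  classes := ((univ.image c).sort).map fun t => c ⁻¹' {t}
  length_le := by simpa using hc
  nonempty s hs := by
    obtain ⟨t, ht, rfl⟩ := List.mem_map.mp hs
    obtain ⟨i, -, rfl⟩ := mem_image.mp (mem_sort _ |>.mp ht)
    exact ⟨i, rfl⟩
  pairwise_disjoint :=
    List.Pairwise.map _ (fun _ _ hne => (Set.disjoint_singleton.mpr hne).preimage c)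
      (sort_nodup _ _)
  covers i := ⟨_, List.mem_map_of_mem ((mem_sort _).mpr (mem_image_of_mem c (mem_univ i))), rfl⟩

theorem preimage_mem_ofFun_classes (c : Δ → β) (hc : #(univ.image c) ≤ n) (i : Δ) :
    c ⁻¹' {c i} ∈ (ofFun c hc).classes :=
  List.mem_map_of_mem ((mem_sort _).mpr (mem_image_of_mem c (mem_univ i)))

theorem apply_inv_apply_eq_of_smul_ofFun_eq {c : Δ → β} {hc : #(univ.image c) ≤ n}
    {f g : Perm Δ} (h : f • ofFun c hc = g • ofFun c hc) (i : Δ) : c (f⁻¹ (g i)) = c i := by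
  have hclasses := List.map_inj_left.mp (congrArg classes h) _ (preimage_mem_ofFun_classes c hc i)
  obtain ⟨i', hi', hfi'⟩ : g i ∈ f '' (c ⁻¹' {c i}) := hclasses ▸ Set.mem_image_of_mem g rfl
  simpa [← hfi'] using hi'

end OrderedPartition

theorem wreathElem_one_smul_mem_orbit {ι Γ Δ : Type*} {K : Subgroup (Perm Γ)}
    {L : Subgroup (Perm Δ)} {σ τ : Perm Δ} (hτ : τ ∈ L) (α : ι → Δ → Γ)
    (hrows : ∀ i, Function.swap α (σ⁻¹ (τ i)) ∈ orbit K (Function.swap α i)) :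
    wreathElem (1 : Δ → Perm Γ) σ • α ∈ orbit (wreathProduct K L) α := by
  choose ks hks using hrows
  refine ⟨⟨wreathElem (fun i => ks i) τ, fun i => ks i, τ, fun i => (ks i).2, hτ, rfl⟩, ?_⟩
  funext j i
  change wreathElem (fun i => (ks i : Perm Γ)) τ (α j) i = wreathElem 1 σ (α j) i
  simpa [wreathElem_apply, Pi.smul_apply, Subgroup.smul_def, Perm.smul_def, Function.swap]
    using congrFun (hks (τ⁻¹ i)) j

theorem one_wreath_partClosure_le_mClosure_general {Γ : Type*} [Fintype Γ] {d : ℕ}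
    (K : Subgroup (Equiv.Perm Γ)) (L : Subgroup (Equiv.Perm (Fin d)))
    (m : ℕ) :
    wreathProduct (⊥ : Subgroup (Equiv.Perm Γ)) (partClosure (min (numOrbits m K) d) L) ≤
      mClosure m (wreathProduct K L) := by
  rintro _ ⟨gs, σ, hgs, hσ, rfl⟩
  obtain rfl : gs = 1 := funext fun i => Subgroup.mem_bot.mp (hgs i)
  refine mem_mClosure_iff.mpr fun α => ?_
  let e := Finite.equivFin (orbitRel.Quotient K (Fin m → Γ))
  let c : Fin d → Fin (numOrbits m K) := fun i => e ⟦Function.swap α i⟧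
  have hc : #(univ.image c) ≤ min (numOrbits m K) d :=
    le_min (card_le_univ _ |>.trans_eq (Fintype.card_fin _))
      (card_image_le.trans_eq (card_fin d))
  obtain ⟨τ, hτ⟩ := mem_partClosure_iff.mp hσ (OrderedPartition.ofFun c hc)
  refine wreathElem_one_smul_mem_orbit τ.2 α fun i => ?_
  have hci := OrderedPartition.apply_inv_apply_eq_of_smul_ofFun_eq hτ.symm i
  exact orbitRel_apply.mp (Quotient.exact (e.injective hci))

/-- `1 ↑ L^[k] ≤ (K↑L)^(m)`, where `1` is the trivial subgroup of `Sym(Γ)` and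
`k = min{k_m, d}`. -/
theorem one_wreath_partClosure_le_mClosure {Γ : Type*} [Fintype Γ] {d : ℕ}
    (K : Subgroup (Equiv.Perm Γ)) (L : Subgroup (Equiv.Perm (Fin d)))
    (m : ℕ) (hm : 2 ≤ m) :
    wreathProduct (⊥ : Subgroup (Equiv.Perm Γ)) (partClosure (min (numOrbits m K) d) L) ≤
      mClosure m (wreathProduct K L) :=
  one_wreath_partClosure_le_mClosure_general K L m
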